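/- Let u be an infinite word, let w be a nonempty unbordered finite word, and let e be the largest integer such that w^e is a factor of u. Then two distinct occurrences of w^e in u do not overlap: if j < j' are occurrences of w^e in u, then j' − j ≥ e·|w|. Consequently, w^e is a prefix of every return word to w^e in u. -/

import Mathlib

open scoped BigOperators ENNReal

namespace PeriodicityComplexity

variable {A : Type*}

/-- The finite word `z` occurs in the infinite word `w` at the (0-based) index `j`,
i.e. `z` occupies positions `j+1, …, j+|z|` of `w`. -/
def OccursAt (w : ℕ → A) (z : List A) (j : ℕ) : Prop :=
  z = List.ofFn (fun t : Fin z.length => w (j + t))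

/-- `z` is a (finite) factor of the infinite word `w`. -/
def IsFactor (w : ℕ → A) (z : List A) : Prop := ∃ j, OccursAt w z j

/-- An infinite word is uniformly recurrent if every factor occurs with bounded gaps. -/
def UniformlyRecurrent (w : ℕ → A) : Prop :=
  ∀ z : List A, IsFactor w z → ∃ N : ℕ, ∀ j : ℕ, ∃ t, j ≤ t ∧ t < j + N ∧ OccursAt w z t

/-- An infinite word is periodic if some `p ≥ 1` is a period of all of it. -/
def Periodic (w : ℕ → A) : Prop := ∃ p : ℕ, 1 ≤ p ∧ ∀ i, w (i + p) = w i

/-- An infinite word is ultimately periodic if some `p ≥ 1` is a period from some point on. -/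
def UltimatelyPeriodic (w : ℕ → A) : Prop :=
  ∃ p : ℕ, 1 ≤ p ∧ ∃ N : ℕ, ∀ i, N ≤ i → w (i + p) = w i

/-- The `e`-fold concatenation `v^e` of a finite word `v`. -/
def wpow (v : List A) (e : ℕ) : List A := (List.replicate e v).flatten

/-- The prefix of length `i` of an infinite word. -/
def wordPrefix (w : ℕ → A) (i : ℕ) : List A := List.ofFn (fun t : Fin i => w t)

/-- `r` is a repetition word at position `i` of the infinite word `w` (`w = uv`, `|u| = i`):
`r` is nonempty, suffix-comparable with `u`, and a prefix of the infinite remainder `v`. -/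
def IsRepWordAt (w : ℕ → A) (i : ℕ) (r : List A) : Prop :=
  r ≠ [] ∧ (r <:+ wordPrefix w i ∨ wordPrefix w i <:+ r) ∧ OccursAt w r i

/-- Local period of an infinite word at position `i`, as an extended nonnegative real
(`⊤` if there is no repetition word at that position). -/
noncomputable def localPeriod (w : ℕ → A) (i : ℕ) : ℝ≥0∞ :=
  sInf ((fun r : List A => (r.length : ℝ≥0∞)) '' {r | IsRepWordAt w i r})

/-- Periodicity complexity `h_w(i) = (1/i) ∑_{j=1}^{i} p_w(j)` of an infinite word. -/
noncomputable def pcomplexity (w : ℕ → A) (i : ℕ) : ℝ≥0∞ :=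
  (∑ j ∈ Finset.Icc 1 i, localPeriod w j) / (i : ℝ≥0∞)

/-- `r` is a repetition word at position `i` of the finite word `v` (`v = xy`, `|x| = i`):
`r` is nonempty, suffix-comparable with `x` and prefix-comparable with `y`. -/
def IsRepWordAtF (v : List A) (i : ℕ) (r : List A) : Prop :=
  r ≠ [] ∧ (r <:+ v.take i ∨ v.take i <:+ r) ∧ (r <+: v.drop i ∨ v.drop i <+: r)

/-- Local period of a finite word at position `i`. -/
noncomputable def localPeriodF (v : List A) (i : ℕ) : ℕ :=
  sInf {n : ℕ | ∃ r : List A, IsRepWordAtF v i r ∧ r.length = n}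

/-- Average local period `h(v) = (1/|v|) ∑_{i=1}^{|v|} p_v(i)` of a finite word. -/
noncomputable def hF (v : List A) : ℝ :=
  (∑ i ∈ Finset.Icc 1 v.length, (localPeriodF v i : ℝ)) / (v.length : ℝ)

/-- An infinite word is of bounded repetition if the exponents of powers of nonempty
words occurring in it are bounded. -/
def BoundedRepetition (w : ℕ → A) : Prop :=
  ∃ E : ℕ, ∀ (v : List A) (e : ℕ), v ≠ [] → IsFactor w (wpow v e) → e ≤ E

/-- `p` is a period of the finite word `z`. -/
def HasPeriodF (z : List A) (p : ℕ) : Prop :=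
  ∀ t : ℕ, t + p < z.length → z[t]? = z[t + p]?

/-- The (least) period of a finite word. -/
noncomputable def periodF (z : List A) : ℕ := sInf {p : ℕ | 1 ≤ p ∧ HasPeriodF z p}

/-- `r` is a return word to `z` in the infinite word `w`: `r` is the factor of `w` between
two consecutive occurrences of `z`. -/
def IsReturnWord (w : ℕ → A) (z r : List A) : Prop :=
  r ≠ [] ∧ ∃ j : ℕ, OccursAt w z j ∧ OccursAt w z (j + r.length) ∧
    (∀ t, j < t → t < j + r.length → ¬ OccursAt w z t) ∧ OccursAt w r j

/-- `l` is the length of some return word to `z` in `w`. -/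
def IsReturnLength (w : ℕ → A) (z : List A) (l : ℕ) : Prop :=
  ∃ r : List A, IsReturnWord w z r ∧ r.length = l

/-- The maximal return time of `z` in `w`. -/
noncomputable def maxReturnTime (w : ℕ → A) (z : List A) : ℕ :=
  sSup {l : ℕ | IsReturnLength w z l}

/-- A finite word is unbordered if no proper nonempty prefix of it is also a suffix. -/
def Unbordered (z : List A) : Prop :=
  ∀ b : List A, b ≠ [] → b.length < z.length → b <+: z → ¬ b <:+ z

/-- A finite word is primitive if it is not a (trivial or nontrivial) power of a word
other than itself. -/
def Primitive (z : List A) : Prop :=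
  ∀ (v : List A) (k : ℕ), z = wpow v k → k = 1

/-- A finite word is Lyndon if it is primitive and lexicographically minimal among its
conjugates: `z ≤ yx` for every factorization `z = xy`. -/
def IsLyndon [LinearOrder A] (z : List A) : Prop :=
  Primitive z ∧ ∀ x y : List A, z = x ++ y → z ≤ y ++ x

end PeriodicityComplexity

/-!
If two occurrences of `w^e` start at distance `d < e|w|`, write `d = q|w| + s` with `s < |w|`.
For `s = 0` the second occurrence continues a block `w` of the first one, so `w^(e+1)` occurs,
contradicting the maximality of `e`. For `s > 0` some block `w` of the first occurrence overlaps
the first block of the second one by a proper nonempty amount, and the overlap is a border of `w`.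
Non-overlapping occurrences of `z` make `z` a prefix of every return word to `z`.
-/

namespace PeriodicityComplexity

variable {A : Type*} {u : ℕ → A}

theorem occursAt_iff {z : List A} {j : ℕ} :
    OccursAt u z j ↔ ∀ t (ht : t < z.length), z[t] = u (j + t) := by
  constructor
  · intro h t ht
    simpa using List.getElem_of_eq h ht
  · intro h
    exact List.ext_getElem (by simp) fun t ht _ => by simp [h t ht]

theorem OccursAt.eq_of_length_eq {x y : List A} {j : ℕ} (hx : OccursAt u x j)
    (hy : OccursAt u y j) (hxy : x.length = y.length) : x = y := by
  rw [occursAt_iff] at hx hy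
  exact List.ext_getElem hxy fun t htx hty => by rw [hx t htx, hy t hty]

theorem OccursAt.take {x : List A} {j : ℕ} (hx : OccursAt u x j) (n : ℕ) :
    OccursAt u (x.take n) j := by
  rw [occursAt_iff] at hx ⊢
  intro t ht
  rw [List.getElem_take, hx]

theorem OccursAt.drop {x : List A} {j : ℕ} (hx : OccursAt u x j) (s : ℕ) :
    OccursAt u (x.drop s) (j + s) := by
  rw [occursAt_iff] at hx ⊢
  intro t ht
  rw [List.getElem_drop, hx, Nat.add_assoc]

theorem occursAt_append_iff {x y : List A} {j : ℕ} :
    OccursAt u (x ++ y) j ↔ OccursAt u x j ∧ OccursAt u y (j + x.length) := by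
  constructor
  · intro h
    refine ⟨?_, ?_⟩
    · simpa using h.take x.length
    · simpa using h.drop x.length
  · rintro ⟨hx, hy⟩
    rw [occursAt_iff] at hx hy ⊢
    intro t ht
    rcases lt_or_ge t x.length with htx | htx
    · rw [List.getElem_append_left htx, hx]
    · rw [List.getElem_append_right htx, hy _ (by simp at ht; omega)]
      congr 1
      omega

theorem OccursAt.isPrefix {z r : List A} {j : ℕ} (hz : OccursAt u z j) (hr : OccursAt u r j)
    (hzr : z.length ≤ r.length) : z <+: r := by
  rw [hz.eq_of_length_eq (hr.take z.length) (by simp [hzr])]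
  exact List.take_prefix _ _

theorem wpow_succ (v : List A) (e : ℕ) : wpow v (e + 1) = v ++ wpow v e := by
  simp [wpow, List.replicate_succ]

theorem length_wpow (v : List A) (e : ℕ) : (wpow v e).length = e * v.length := by
  simp [wpow]

theorem OccursAt.of_wpow {w : List A} {e j q : ℕ} (h : OccursAt u (wpow w e) j) (hq : q < e) :
    OccursAt u w (j + q * w.length) := by
  obtain ⟨e, rfl⟩ := Nat.exists_eq_add_one_of_ne_zero (Nat.ne_zero_of_lt hq)
  rw [wpow_succ, occursAt_append_iff] at h
  induction q generalizing e j with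
  | zero => simpa using h.1
  | succ q ih =>
    obtain ⟨e, rfl⟩ := Nat.exists_eq_add_one_of_ne_zero (by omega : e ≠ 0)
    rw [wpow_succ, occursAt_append_iff] at h
    convert ih e h.2 (by omega) using 1
    ring

/-- The common part of the two occurrences is the border `w.drop s = w.take (|w| - s)`. -/
theorem Unbordered.not_occursAt_add {w : List A} (hub : Unbordered w) {p s : ℕ}
    (hp : OccursAt u w p) (hps : OccursAt u w (p + s)) (hs : 0 < s) (hsw : s < w.length) :
    False := by
  have hborder : w.drop s = w.take (w.length - s) :=
    (hp.drop s).eq_of_length_eq (hps.take _) (by simp)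
  refine hub (w.drop s) ?_ (by simp; omega) ?_ (List.drop_suffix s w)
  · simpa [List.drop_eq_nil_iff] using hsw
  · exact hborder ▸ List.take_prefix _ _

theorem Unbordered.le_sub_of_occursAt_wpow {w : List A} (hub : Unbordered w) {e : ℕ}
    (hmax : ¬ IsFactor u (wpow w (e + 1))) {j j' : ℕ} (hj : OccursAt u (wpow w e) j)
    (hj' : OccursAt u (wpow w e) j') (hjj' : j < j') : e * w.length ≤ j' - j := by
  by_contra! hlt
  have hw : 0 < w.length := Nat.pos_of_mul_pos_left (by omega : 0 < e * w.length)
  obtain ⟨q, s, hd, hs⟩ : ∃ q s, j' - j = q * w.length + s ∧ s < w.length :=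
    ⟨_, _, (Nat.div_add_mod' _ _).symm, Nat.mod_lt _ hw⟩
  rcases Nat.eq_zero_or_pos s with rfl | hs0
  · obtain ⟨q, rfl⟩ := Nat.exists_eq_add_one_of_ne_zero (by rintro rfl; omega : q ≠ 0)
    have hq : q + 1 < e := Nat.lt_of_mul_lt_mul_right (a := w.length) (by omega)
    have hblock : OccursAt u w (j + q * w.length) := hj.of_wpow (by omega)
    have hnext : j + q * w.length + w.length = j' := by rw [Nat.add_one_mul] at hd; omega
    refine hmax ⟨j + q * w.length, ?_⟩
    rw [wpow_succ, occursAt_append_iff, hnext]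
    exact ⟨hblock, hj'⟩
  · have hq : q < e := Nat.lt_of_mul_lt_mul_right (a := w.length) (by omega)
    have hblock : OccursAt u w (j + q * w.length) := hj.of_wpow hq
    have hfirst : OccursAt u w (j + q * w.length + s) := by
      have := hj'.of_wpow (q := 0) (by omega)
      rwa [Nat.zero_mul, Nat.add_zero, show j' = j + q * w.length + s by omega] at this
    exact hub.not_occursAt_add hblock hfirst hs0 hs

theorem IsReturnWord.isPrefix {z r : List A}
    (hdisj : ∀ j j', OccursAt u z j → OccursAt u z j' → j < j' → z.length ≤ j' - j)
    (hr : IsReturnWord u z r) : z <+: r := by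
  obtain ⟨hne, j, hj, hnext, -, hrj⟩ := hr
  have := hdisj j (j + r.length) hj hnext (by simpa using List.length_pos_iff.mpr hne)
  exact hj.isPrefix hrj (by omega)

end PeriodicityComplexity

open PeriodicityComplexity

theorem occurrences_of_maximal_power_do_not_overlap_general
    {A : Type*} (u : ℕ → A) (w : List A) (hub : Unbordered w)
    (e : ℕ) (he2 : ¬ IsFactor u (wpow w (e + 1))) :
    (∀ j j' : ℕ, OccursAt u (wpow w e) j → OccursAt u (wpow w e) j' → j < j' →
      e * w.length ≤ j' - j) ∧
    (∀ r : List A, IsReturnWord u (wpow w e) r → wpow w e <+: r) := by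
  have hdisj : ∀ j j', OccursAt u (wpow w e) j → OccursAt u (wpow w e) j' → j < j' →
      e * w.length ≤ j' - j :=
    fun _ _ => hub.le_sub_of_occursAt_wpow he2
  exact ⟨hdisj, fun r hr => hr.isPrefix (by simpa only [length_wpow] using hdisj)⟩

/-- Let `u` be an infinite word, `w` a nonempty unbordered finite word and
`e` the largest integer with `w^e` a factor of `u`. Then two distinct occurrences of `w^e`
in `u` do not overlap (`j < j'` occurrences imply `j' - j ≥ e·|w|`), and consequently `w^e`
is a prefix of every return word to `w^e` in `u`. -/
theorem occurrences_of_maximal_power_do_not_overlap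
    {A : Type*} (u : ℕ → A) (w : List A) (hw : w ≠ []) (hub : Unbordered w)
    (e : ℕ) (he1 : IsFactor u (wpow w e)) (he2 : ¬ IsFactor u (wpow w (e + 1))) :
    (∀ j j' : ℕ, OccursAt u (wpow w e) j → OccursAt u (wpow w e) j' → j < j' →
      e * w.length ≤ j' - j) ∧
    (∀ r : List A, IsReturnWord u (wpow w e) r → wpow w e <+: r) :=
  occurrences_of_maximal_power_do_not_overlap_general u w hub e he2
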